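/- Let G, H be graphs equipped with a unary predicate I, and suppose Duplicator has a winning strategy in the k-round EF game on (G, I) and (H, I). Let G_I, H_I be obtained by attaching exactly one new leaf to each vertex satisfying I. Then Duplicator has a winning strategy in the k-round EF game on G_I and H_I. -/

import Mathlib

/-- A list of pairs of chosen vertices is a partial isomorphism between the graphs
`G` and `H` equipped with unary predicates `IG` and `IH`. -/
def EFPartialIsoI {V W : Type*} (G : SimpleGraph V) (IG : V → Prop)
    (H : SimpleGraph W) (IH : W → Prop) (l : List (V × W)) : Prop :=
  (∀ p ∈ l, (IG (p : V × W).1 ↔ IH p.2)) ∧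
  ∀ p ∈ l, ∀ q ∈ l,
    ((p : V × W).1 = (q : V × W).1 ↔ p.2 = q.2) ∧ (G.Adj p.1 q.1 ↔ H.Adj p.2 q.2)

/-- Duplicator has a winning strategy in the `k`-round Ehrenfeucht–Fraïssé game on
the graphs `G` and `H` equipped with unary predicates `IG` and `IH`. -/
def EFDupWinsI {V W : Type*} (G : SimpleGraph V) (IG : V → Prop)
    (H : SimpleGraph W) (IH : W → Prop) : ℕ → List (V × W) → Prop
  | 0, l => EFPartialIsoI G IG H IH l
  | (k + 1), l =>
      (∀ a : V, ∃ b : W, EFDupWinsI G IG H IH k ((a, b) :: l)) ∧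
      (∀ b : W, ∃ a : V, EFDupWinsI G IG H IH k ((a, b) :: l))

/-- Duplicator has a winning strategy in the `k`-round EF game on two plain graphs. -/
def EFDupWins {V W : Type*} (G : SimpleGraph V) (H : SimpleGraph W) :
    ℕ → List (V × W) → Prop :=
  EFDupWinsI G (fun _ => False) H (fun _ => False)

/-- The graph obtained from `G` by attaching exactly one new leaf to each vertex
satisfying the unary predicate `I`. -/
def attachLeaves {V : Type*} (G : SimpleGraph V) (I : V → Prop) :
    SimpleGraph (V ⊕ {v : V // I v}) :=
  SimpleGraph.fromRel (fun a b =>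
    match a, b with
    | Sum.inl u, Sum.inl v => G.Adj u v
    | Sum.inl u, Sum.inr v => u = v.1
    | Sum.inr _, _ => False)

/-!
Duplicator plays the given strategy on base vertices: when Spoiler picks a vertex of
`G_I`, she answers by the `H`-vertex that the strategy assigns to its base vertex, taking
the leaf of that vertex if Spoiler picked a leaf. That leaf exists because the strategy
preserves `I`. Since adjacency and equality in `G_I` are determined by the base vertices
together with which of the two is a leaf, the final position is a partial isomorphism.
-/

section

open Sum

variable {V W : Type*} {G : SimpleGraph V} {IG : V → Prop} {H : SimpleGraph W} {IH : W → Prop}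

theorem EFPartialIsoI.of_subset {l l' : List (V × W)} (h : EFPartialIsoI G IG H IH l')
    (hl : l ⊆ l') : EFPartialIsoI G IG H IH l :=
  ⟨fun p hp => h.1 p (hl hp), fun p hp q hq => h.2 p (hl hp) q (hl hq)⟩

theorem EFDupWinsI.partialIso :
    ∀ {k : ℕ} {l : List (V × W)}, EFDupWinsI G IG H IH k l → EFPartialIsoI G IG H IH l
  | 0, _, h => h
  | _ + 1, [], _ => ⟨by simp, by simp⟩
  | _ + 1, p :: _, h =>
    let ⟨_, hb⟩ := h.1 p.1
    hb.partialIso.of_subset (List.subset_cons_self _ _)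

namespace attachLeaves

def base (I : V → Prop) : V ⊕ {v : V // I v} → V :=
  Sum.elim id Subtype.val

@[simp]
theorem adj_inl_inl {u v : V} : (attachLeaves G IG).Adj (inl u) (inl v) ↔ G.Adj u v := by
  simp only [attachLeaves, SimpleGraph.fromRel_adj, ne_eq, inl.injEq]
  exact ⟨fun ⟨_, h⟩ => h.elim id .symm, fun h => ⟨G.ne_of_adj h, .inl h⟩⟩

@[simp]
theorem adj_inl_inr {u : V} {v : {v : V // IG v}} :
    (attachLeaves G IG).Adj (inl u) (inr v) ↔ u = v.1 := by
  simp [attachLeaves]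

@[simp]
theorem adj_inr_inl {u : V} {v : {v : V // IG v}} :
    (attachLeaves G IG).Adj (inr v) (inl u) ↔ v.1 = u := by
  rw [SimpleGraph.adj_comm, adj_inl_inr, eq_comm]

@[simp]
theorem not_adj_inr_inr {v w : {v : V // IG v}} : ¬(attachLeaves G IG).Adj (inr v) (inr w) := by
  simp [attachLeaves]

theorem exists_base_eq_isRight_eq (a : V ⊕ {v : V // IG v}) (b₀ : W)
    (hI : IG (base IG a) ↔ IH b₀) :
    ∃ b : W ⊕ {w : W // IH w}, base IH b = b₀ ∧ a.isRight = b.isRight := by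
  cases a with
  | inl _ => exact ⟨inl b₀, rfl, rfl⟩
  | inr v => exact ⟨inr ⟨b₀, hI.1 v.2⟩, rfl, rfl⟩

end attachLeaves

open attachLeaves

theorem EFPartialIsoI.attachLeaves {l : List ((V ⊕ {v : V // IG v}) × (W ⊕ {w : W // IH w}))}
    (hkind : ∀ p ∈ l, p.1.isRight = p.2.isRight)
    (h : EFPartialIsoI G IG H IH (l.map (Prod.map (base IG) (base IH)))) :
    EFPartialIsoI (attachLeaves G IG) (fun _ => False) (attachLeaves H IH) (fun _ => False) l := by
  refine ⟨fun _ _ => Iff.rfl, fun p hp q hq => ?_⟩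
  have hp' := hkind p hp
  have hq' := hkind q hq
  have := h.2 _ (List.mem_map_of_mem hp) _ (List.mem_map_of_mem hq)
  obtain ⟨a, b⟩ := p
  obtain ⟨a', b'⟩ := q
  cases a <;> cases b <;> cases a' <;> cases b' <;> simp_all [base, Subtype.ext_iff]

theorem EFDupWinsI.attachLeaves :
    ∀ {k : ℕ} {l : List ((V ⊕ {v : V // IG v}) × (W ⊕ {w : W // IH w}))},
      (∀ p ∈ l, p.1.isRight = p.2.isRight) →
      EFDupWinsI G IG H IH k (l.map (Prod.map (base IG) (base IH))) →
      EFDupWins (attachLeaves G IG) (attachLeaves H IH) k l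
  | 0, _, hkind, h => EFPartialIsoI.attachLeaves hkind h
  | _ + 1, _, hkind, h => by
    constructor
    · intro a
      obtain ⟨b₀, hb₀⟩ := h.1 (base IG a)
      obtain ⟨b, rfl, hab⟩ :=
        exists_base_eq_isRight_eq a b₀ (hb₀.partialIso.1 _ List.mem_cons_self)
      exact ⟨b, EFDupWinsI.attachLeaves (List.forall_mem_cons.2 ⟨hab, hkind⟩) hb₀⟩
    · intro b
      obtain ⟨a₀, ha₀⟩ := h.2 (base IH b)
      obtain ⟨a, rfl, hba⟩ :=
        exists_base_eq_isRight_eq b a₀ (ha₀.partialIso.1 _ List.mem_cons_self).symm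
      exact ⟨a, EFDupWinsI.attachLeaves (List.forall_mem_cons.2 ⟨hba.symm, hkind⟩) ha₀⟩

end

/-- If Duplicator wins the `k`-round EF game on `(G, I_G)` and `(H, I_H)`, then
Duplicator wins the `k`-round EF game on the graphs `G_I`, `H_I` obtained by
attaching exactly one leaf to each vertex satisfying the unary predicate. -/
theorem firstOrderComplexity.EF_attachLeaves
    {V W : Type*} (G : SimpleGraph V) (IG : V → Prop)
    (H : SimpleGraph W) (IH : W → Prop) (k : ℕ)
    (h : EFDupWinsI G IG H IH k []) :
    EFDupWins (attachLeaves G IG) (attachLeaves H IH) k [] :=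
  h.attachLeaves (by simp)
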